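/- arXiv:2310.16090 — 2 statements merged into one kernel-verified Lean document; each statement's English description precedes it below -/
import Mathlib

section
/- There exists a group automorphism of the multiplicative group ℂˣ of nonzero complex numbers whose order is exactly 3 (i.e., f ∘ f ∘ f = id but f ≠ id). -/
/-!
Write `z ∈ ℂˣ` as `z = u · exp t` with `|u| = 1` and `t = log |z|`. Any additive map `L : ℝ → ℝ`
gives the endomorphism `u · exp t ↦ u · exp (L t) = z · exp (L t - t)` of `ℂˣ`; this is
functorial and injective in `L`, so it turns additive automorphisms of `ℝ` into automorphisms of
`ℂˣ` of the same order. A Hamel basis of `ℝ` over `ℚ` is infinite, so cycling three of its elements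
gives a `ℚ`-linear automorphism of `ℝ` of order three.
-/

open Real

theorem Module.Basis.infinite_index_of_uncountable {ι R M : Type*} [Semiring R]
    [AddCommMonoid M] [Module R M] [Countable R] [Uncountable M] (b : Basis ι R M) :
    Infinite ι := by
  by_contra hι
  have : Finite ι := not_infinite_iff_finite.mp hι
  exact not_countable_iff.mpr ‹Uncountable M› (Countable.of_equiv _ b.repr.toEquiv.symm)

theorem Equiv.Perm.exists_orderOf_eq_three (ι : Type*) [Infinite ι] :
    ∃ σ : Equiv.Perm ι, orderOf σ = 3 := by
  classical
  let e : Fin 3 ↪ ι := Fin.valEmbedding.trans (Infinite.natEmbedding ι)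
  refine ⟨extendDomainHom (Equiv.ofInjective e e.injective) (finRotate 3), ?_⟩
  rw [orderOf_injective _ (extendDomainHom_injective _),
    (show IsThreeCycle (finRotate 3) from cycleType_finRotate).orderOf]

namespace Module.Basis

variable {ι R M : Type*} [Semiring R] [AddCommMonoid M] [Module R M]

noncomputable def equivHom (b : Basis ι R M) : Equiv.Perm ι →* (M ≃ₗ[R] M) where
  toFun σ := b.equiv b σ
  map_one' := b.equiv_refl
  map_mul' σ τ := (b.equiv_trans b b τ σ).symm

theorem equivHom_injective [Nontrivial R] (b : Basis ι R M) : Function.Injective b.equivHom := by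
  intro σ τ h
  ext i
  apply b.injective
  simpa [equivHom] using LinearEquiv.congr_fun h (b i)

end Module.Basis

noncomputable def radialTwist (L : ℝ → ℝ) (z : ℂˣ) : ℂˣ :=
  z * Units.mk0 (exp (L (log ‖(z : ℂ)‖) - log ‖(z : ℂ)‖) : ℂ)
    (Complex.ofReal_ne_zero.mpr (exp_pos _).ne')

theorem val_radialTwist (L : ℝ → ℝ) (z : ℂˣ) :
    (radialTwist L z : ℂ) = z * (exp (L (log ‖(z : ℂ)‖) - log ‖(z : ℂ)‖) : ℂ) :=
  rfl

theorem log_norm_radialTwist (L : ℝ → ℝ) (z : ℂˣ) :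
    log ‖(radialTwist L z : ℂ)‖ = L (log ‖(z : ℂ)‖) := by
  have hz : ‖(z : ℂ)‖ ≠ 0 := norm_ne_zero_iff.mpr z.ne_zero
  rw [val_radialTwist, norm_mul, Complex.norm_real, norm_of_nonneg (exp_pos _).le,
    log_mul hz (exp_pos _).ne', log_exp]
  ring

theorem radialTwist_radialTwist (L M : ℝ → ℝ) (z : ℂˣ) :
    radialTwist L (radialTwist M z) = radialTwist (L ∘ M) z := by
  ext
  rw [val_radialTwist, log_norm_radialTwist, val_radialTwist, val_radialTwist, mul_assoc,
    ← Complex.ofReal_mul, ← exp_add, Function.comp_apply]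
  ring_nf

theorem radialTwist_id (z : ℂˣ) : radialTwist id z = z := by
  ext
  simp [val_radialTwist]

theorem radialTwist_mul (L : ℝ →+ ℝ) (z w : ℂˣ) :
    radialTwist L (z * w) = radialTwist L z * radialTwist L w := by
  have hz : ‖(z : ℂ)‖ ≠ 0 := norm_ne_zero_iff.mpr z.ne_zero
  have hw : ‖(w : ℂ)‖ ≠ 0 := norm_ne_zero_iff.mpr w.ne_zero
  ext
  simp only [val_radialTwist, Units.val_mul, norm_mul, log_mul hz hw, map_add]
  rw [show ∀ a b c d : ℝ, a + b - (c + d) = (a - c) + (b - d) by intros; ring, exp_add,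
    Complex.ofReal_mul]
  ring

theorem radialTwist_injective : Function.Injective radialTwist := by
  intro L M h
  funext t
  let z : ℂˣ := Units.mk0 (exp t : ℂ) (Complex.ofReal_ne_zero.mpr (exp_pos t).ne')
  have hz : log ‖(z : ℂ)‖ = t := by simp [z]
  simpa [log_norm_radialTwist, hz] using congr_arg (fun f => log ‖((f z : ℂˣ) : ℂ)‖) h

noncomputable def radialTwistHom (R : Type*) [Semiring R] [Module R ℝ] :
    (ℝ ≃ₗ[R] ℝ) →* MulAut ℂˣ where
  toFun L :=
    { toFun := radialTwist L
      invFun := radialTwist L.symm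
      left_inv z := by
        rw [radialTwist_radialTwist, show ⇑L.symm ∘ ⇑L = id from funext L.symm_apply_apply,
          radialTwist_id]
      right_inv z := by
        rw [radialTwist_radialTwist, show ⇑L ∘ ⇑L.symm = id from funext L.apply_symm_apply,
          radialTwist_id]
      map_mul' := radialTwist_mul L.toAddMonoidHom }
  map_one' := MulEquiv.ext radialTwist_id
  map_mul' _ _ := MulEquiv.ext fun z => (radialTwist_radialTwist _ _ z).symm

theorem radialTwistHom_injective (R : Type*) [Semiring R] [Module R ℝ] :
    Function.Injective (radialTwistHom R) :=
  fun _ _ h => LinearEquiv.ext (congr_fun (radialTwist_injective (congr_arg DFunLike.coe h)))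

/-- There exists a group automorphism of the multiplicative group `ℂˣ`
whose order is exactly 3: `f ∘ f ∘ f = id` but `f ≠ id`. -/
theorem exists_order_three_automorphism_of_complex_units :
    ∃ f : ℂˣ ≃* ℂˣ, (∀ z, f (f (f z)) = z) ∧ f ≠ MulEquiv.refl ℂˣ := by
  let b := Module.Basis.ofVectorSpace ℚ ℝ
  have := b.infinite_index_of_uncountable
  obtain ⟨σ, hσ⟩ := Equiv.Perm.exists_orderOf_eq_three (Module.Basis.ofVectorSpaceIndex ℚ ℝ)
  let φ := (radialTwistHom ℚ).comp b.equivHom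
  have hφ : Function.Injective φ := (radialTwistHom_injective ℚ).comp b.equivHom_injective
  have hf : orderOf (φ σ) = 3 := by rw [orderOf_injective φ hφ, hσ]
  refine ⟨φ σ, fun z => ?_, fun h => ?_⟩
  · have h3 := pow_orderOf_eq_one (φ σ)
    rw [hf] at h3
    simpa [pow_succ] using DFunLike.congr_fun h3 z
  · rw [← MulAut.one_def, ← orderOf_eq_one_iff, hf] at h
    exact absurd h (by norm_num)
end

section
/- Every continuous group automorphism f of ℂˣ (with its usual topology) satisfying f ∘ f ∘ f = id is the identity. In particular, ℂˣ has no continuous automorphism of order exactly 3. -/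
/-!
Since `exp : ℂ → ℂˣ` is a covering map and `ℂ` is simply connected, a continuous endomorphism
`f` of `ℂˣ` lifts to a continuous additive, hence `ℝ`-linear, map `L` with
`f (exp z) = exp (L z)` and `L 0 = 0`. Uniqueness of lifts turns `f³ = id` into `L³ = id`.
As `exp (L (2πi)) = f 1 = 1`, `L i = n i` for an integer `n`, and `n³ = 1` forces `n = 1`.
In the basis `1, i` the matrix of `L` is then `!![a, 0; b, 1]`, whose cube
`!![a³, 0; b (a² + a + 1), 1]` is the identity only for `a = 1`, `b = 0`. So `L = id` and `f = id`.
-/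

open Complex

namespace Complex

variable {A : Type*} [TopologicalSpace A]

theorem eq_of_exp_comp_eq [PreconnectedSpace A] {g₁ g₂ : A → ℂ} (h₁ : Continuous g₁)
    (h₂ : Continuous g₂) (he : ∀ a, exp (g₁ a) = exp (g₂ a)) (a : A) (ha : g₁ a = g₂ a) :
    g₁ = g₂ :=
  isCoveringMap_exp.eq_of_comp_eq h₁ h₂ (funext fun a ↦ Subtype.ext (he a)) a ha

theorem exists_continuous_exp_comp_eq [SimplyConnectedSpace A] [LocallyPathConnectedSpace A]
    {g : A → ℂ} (hg : Continuous g) (hg₀ : ∀ a, g a ≠ 0) (a₀ : A) {e₀ : ℂ}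
    (he₀ : exp e₀ = g a₀) : ∃ G : A → ℂ, Continuous G ∧ G a₀ = e₀ ∧ ∀ a, exp (G a) = g a := by
  obtain ⟨G, ⟨hG₀, hG⟩, -⟩ :=
    isCoveringMapOn_exp.existsUnique_continuousMap_lifts ⟨g, hg⟩ he₀ hg₀
  exact ⟨G, G.continuous, hG₀, congrFun hG⟩

noncomputable def unitExp (z : ℂ) : ℂˣ := Units.mk0 (exp z) (exp_ne_zero z)

@[simp] theorem coe_unitExp (z : ℂ) : (unitExp z : ℂ) = exp z := rfl

theorem unitExp_add (z w : ℂ) : unitExp (z + w) = unitExp z * unitExp w :=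
  Units.ext (exp_add z w)

theorem unitExp_zero : unitExp 0 = 1 := Units.ext exp_zero

theorem unitExp_surjective : Function.Surjective unitExp :=
  fun u ↦ ⟨log u, Units.ext (exp_log u.ne_zero)⟩

theorem continuous_unitExp : Continuous unitExp :=
  Units.continuous_iff.mpr ⟨continuous_exp, by simpa [← exp_neg] using continuous_neg.cexp⟩

theorem exists_continuousLinearMap_unitExp_lift (f : ℂˣ →* ℂˣ) (hf : Continuous f) :
    ∃ L : ℂ →L[ℝ] ℂ, ∀ z, f (unitExp z) = unitExp (L z) := by
  have hg : Continuous fun z ↦ (f (unitExp z) : ℂ) :=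
    Units.continuous_val.comp (hf.comp continuous_unitExp)
  obtain ⟨G, hG, hG₀, hGexp⟩ :=
    exists_continuous_exp_comp_eq hg (fun z ↦ (f (unitExp z)).ne_zero) 0 (e₀ := 0)
      (by simp [unitExp_zero])
  -- `z ↦ G (z + w) - G w` is another lift of `f ∘ unitExp` vanishing at `0`
  have hG_add (w : ℂ) : G = fun z ↦ G (z + w) - G w := by
    refine eq_of_exp_comp_eq hG (by fun_prop) (fun z ↦ ?_) 0 (by simp [hG₀])
    rw [exp_sub, hGexp, hGexp, hGexp, unitExp_add, map_mul, Units.val_mul,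
      mul_div_cancel_right₀ _ (f (unitExp w)).ne_zero]
  refine ⟨(AddMonoidHom.mk' G fun z w ↦ ?_).toRealLinearMap hG, fun z ↦ Units.ext (hGexp z).symm⟩
  rw [congrFun (hG_add w) z, sub_add_cancel]

theorem exists_int_apply_I_of_unitExp_lift {f : ℂˣ →* ℂˣ} {L : ℂ →ₗ[ℝ] ℂ}
    (hL : ∀ z, f (unitExp z) = unitExp (L z)) : ∃ n : ℤ, L I = n * I := by
  have h2π : exp (L ((2 * Real.pi : ℝ) • I)) = 1 := by
    have : unitExp ((2 * Real.pi : ℝ) • I) = 1 := Units.ext (by simp [exp_two_pi_mul_I])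
    rw [← coe_unitExp, ← hL, this, map_one, Units.val_one]
  obtain ⟨n, hn⟩ := exp_eq_one_iff.mp h2π
  refine ⟨n, mul_left_cancel₀ (by simp [Real.pi_ne_zero] : (2 * Real.pi : ℂ) ≠ 0) ?_⟩
  rw [map_smul, real_smul] at hn
  push_cast at hn
  linear_combination hn

end Complex

theorem LinearMap.apply_eq_re_smul_add_im_smul (L : ℂ →ₗ[ℝ] ℂ) (z : ℂ) :
    L z = z.re • L 1 + z.im • L I := by
  have hz : z = z.re • (1 : ℂ) + z.im • I := by simp [real_smul, re_add_im]
  conv_lhs => rw [hz, map_add, map_smul, map_smul]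

theorem LinearMap.apply_eq_self_of_apply_I_of_cube_eq_self {L : ℂ →ₗ[ℝ] ℂ} {c : ℝ}
    (hI : L I = c * I) (h3 : ∀ z, L (L (L z)) = z) (z : ℂ) : L z = z := by
  have hL (v : ℂ) : L v = v.re * L 1 + v.im * (c * I) := by
    rw [L.apply_eq_re_smul_add_im_smul, hI, real_smul, real_smul]
  generalize L 1 = u at hL
  have hc : c = 1 := (Odd.pow_inj (by decide : Odd 3)).mp <| by
    simpa [hL, pow_three, mul_assoc] using congrArg im (h3 I)
  subst hc
  obtain ⟨ha, hb⟩ : u.re ^ 3 = 1 ^ 3 ∧ u.im * (u.re ^ 2 + u.re + 1) = 0 := by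
    have h := Complex.ext_iff.mp (h3 1)
    simp only [hL, one_re, one_im, ofReal_one, ofReal_zero, one_mul, zero_mul, add_zero, add_re,
      add_im, mul_re, mul_im, ofReal_re, ofReal_im, sub_zero, I_re, I_im, mul_zero, mul_one,
      sub_self, ofReal_mul, ofReal_add] at h
    exact ⟨by linear_combination h.1, by linear_combination h.2⟩
  have hre : u.re = 1 := (Odd.pow_inj (by decide : Odd 3)).mp ha
  have hu : u = 1 := Complex.ext hre (by rw [hre] at hb; simp only [one_im]; linarith)
  simp [hL, hu, re_add_im]

/-- Every continuous group automorphism `f` of `ℂˣ` (with its usual topology)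
satisfying `f ∘ f ∘ f = id` is the identity; in particular `ℂˣ` has no continuous
automorphism of order exactly 3. -/
theorem continuous_automorphism_of_complex_units_cube_eq_id :
    ∀ f : ℂˣ ≃* ℂˣ, Continuous f → (∀ z, f (f (f z)) = z) → f = MulEquiv.refl ℂˣ := by
  intro f hf h3
  obtain ⟨L, hL⟩ := exists_continuousLinearMap_unitExp_lift f.toMonoidHom hf
  have hL3 : ∀ z, L (L (L z)) = z := by
    refine congrFun (eq_of_exp_comp_eq (by fun_prop) continuous_id (fun z ↦ ?_) 0 (by simp))
    simpa [← coe_unitExp, ← hL] using congrArg Units.val (h3 (unitExp z))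
  obtain ⟨n, hn⟩ := exists_int_apply_I_of_unitExp_lift (L := L.toLinearMap) hL
  have hLid : ∀ z, L z = z :=
    LinearMap.apply_eq_self_of_apply_I_of_cube_eq_self (L := L) (c := n) (by simpa using hn) hL3
  ext1 u
  obtain ⟨z, rfl⟩ := unitExp_surjective u
  simpa [hLid] using hL z
end
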